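/- The function (t₁, t₂) ↦ Λ(t₁) + Λ(t₂) + Λ(π − t₁ − t₂) is strictly concave on the open set { (t₁, t₂) ∈ ℝ² : t₁ > 0, t₂ > 0, t₁ + t₂ < π }, where Λ is the Lobachevsky function. -/

import Mathlib

open Real MeasureTheory

/-- The Lobachevsky function Λ(t) = −∫₀ᵗ log|2 sin u| du. -/
noncomputable def lobachevsky (t : ℝ) : ℝ :=
  -∫ u in (0 : ℝ)..t, Real.log |2 * Real.sin u|

/-!
Strict concavity on a convex set can be tested on lines. Along a line `t ↦ θ + t • v` in the plane
`θ₁ + θ₂ + θ₃ = π` (so `v₁ + v₂ + v₃ = 0`), the sum `∑ Λ(θᵢ)` has second derivative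
`-∑ vᵢ² cot θᵢ`, because `Λ' = -log |2 sin|`. For the angles of a triangle,
`cot θ₁ cot θ₂ + cot θ₂ cot θ₃ + cot θ₃ cot θ₁ = 1` and `cot θ₁ + cot θ₃ > 0`; with these,
completing the square gives `(cot θ₁ + cot θ₃) ∑ vᵢ² cot θᵢ = (v₁ cot θ₁ - v₃ cot θ₃)² + v₂²`,
which is positive unless `v = 0`.
-/

theorem strictConcaveOn_of_hasDerivAt2_neg {D : Set ℝ} (hD : Convex ℝ D) (hDo : IsOpen D)
    {f f' f'' : ℝ → ℝ} (hf : ∀ x ∈ D, HasDerivAt f (f' x) x)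
    (hf' : ∀ x ∈ D, HasDerivAt f' (f'' x) x) (hf'' : ∀ x ∈ D, f'' x < 0) :
    StrictConcaveOn ℝ D f := by
  have hanti : StrictAntiOn f' D := strictAntiOn_of_hasDerivWithinAt_neg hD
    (fun x hx => (hf' x hx).continuousAt.continuousWithinAt)
    (fun x hx => (hf' x (interior_subset hx)).hasDerivWithinAt)
    (fun x hx => hf'' x (interior_subset hx))
  refine StrictAntiOn.strictConcaveOn_of_deriv hD
    (fun x hx => (hf x hx).continuousAt.continuousWithinAt) ?_
  rw [hDo.interior_eq]
  exact hanti.congr fun x hx => ((hf x hx).deriv).symm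

theorem strictConcaveOn_of_forall_lineMap {E : Type*} [AddCommGroup E] [Module ℝ E] {s : Set E}
    {f : E → ℝ} (hs : Convex ℝ s)
    (h : ∀ x ∈ s, ∀ y ∈ s, x ≠ y →
      StrictConcaveOn ℝ (AffineMap.lineMap (k := ℝ) x y ⁻¹' s) (f ∘ AffineMap.lineMap x y)) :
    StrictConcaveOn ℝ s f := by
  refine ⟨hs, fun x hx y hy hxy a b ha hb hab => ?_⟩
  have := (h x hx y hy hxy).2 (x := 0) (by simpa using hx) (y := 1) (by simpa using hy)
    zero_ne_one ha hb hab
  obtain rfl : a = 1 - b := eq_sub_of_add_eq hab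
  simpa [AffineMap.lineMap_apply_module] using this

lemma HasDerivAt.comp_add_mul {f : ℝ → ℝ} {f' a b t : ℝ} (hf : HasDerivAt f f' (a + t * b)) :
    HasDerivAt (fun s => f (a + s * b)) (f' * b) t := by
  have hline : HasDerivAt (fun s => a + s * b) b t := by
    simpa using ((hasDerivAt_id' t).mul_const b).const_add a
  exact hf.comp t hline

lemma sin_pos_of_sum_eq_pi {ι : Type*} [Fintype ι] [Nontrivial ι] {θ : ι → ℝ}
    (hθ : ∀ i, 0 < θ i) (hsum : ∑ i, θ i = π) (i : ι) : 0 < sin (θ i) := by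
  obtain ⟨j, hj⟩ := exists_ne i
  refine sin_pos_of_pos_of_lt_pi (hθ i) (hsum ▸ ?_)
  exact Finset.single_lt_sum hj (Finset.mem_univ _) (Finset.mem_univ _) (hθ j)
    fun k _ _ => (hθ k).le

lemma cot_add_cot {x y : ℝ} (hx : sin x ≠ 0) (hy : sin y ≠ 0) :
    cot x + cot y = sin (x + y) / (sin x * sin y) := by
  rw [cot_eq_cos_div_sin, cot_eq_cos_div_sin, sin_add]
  field_simp
  ring

lemma cot_mul_cot_add_cot_mul_cot_add_cot_mul_cot {x y z : ℝ} (hx : sin x ≠ 0)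
    (hy : sin y ≠ 0) (hz : sin z ≠ 0) (h : x + y + z = π) :
    cot x * cot y + cot y * cot z + cot z * cot x = 1 := by
  obtain rfl : z = π - (x + y) := by linarith
  rw [sin_pi_sub, sin_add] at hz
  simp only [cot_eq_cos_div_sin, sin_pi_sub, cos_pi_sub, sin_add, cos_add]
  field_simp
  ring

lemma sq_mul_add_sq_mul_add_sq_mul_pos {a b c p q r : ℝ} (habc : a * b + b * c + c * a = 1)
    (hac : 0 < a + c) (hpqr : p + q + r = 0) (hpq : p ≠ 0 ∨ q ≠ 0) :
    0 < p ^ 2 * a + q ^ 2 * b + r ^ 2 * c := by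
  have key : (a + c) * (p ^ 2 * a + q ^ 2 * b + r ^ 2 * c) = (a * p - c * r) ^ 2 + q ^ 2 := by
    obtain rfl : r = -p - q := by linarith
    linear_combination q ^ 2 * habc
  refine pos_of_mul_pos_right (key ▸ ?_) hac.le
  rcases eq_or_ne q 0 with rfl | hq
  · have hp : p ≠ 0 := by simpa using hpq
    obtain rfl : r = -p := by linarith
    have : a * p - c * -p = (a + c) * p := by ring
    rw [this]
    positivity
  · positivity

lemma sum_sq_mul_cot_pos {θ b : Fin 3 → ℝ} (hθ : ∀ i, 0 < θ i) (hθπ : ∑ i, θ i = π)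
    (hb : ∑ i, b i = 0) (hb0 : b ≠ 0) : 0 < ∑ i, b i ^ 2 * cot (θ i) := by
  have hsin := sin_pos_of_sum_eq_pi hθ hθπ
  rw [Fin.sum_univ_three] at hθπ hb ⊢
  have hb01 : b 0 ≠ 0 ∨ b 1 ≠ 0 := by
    by_contra! h
    have h2 : b 2 = 0 := by linarith [h.1, h.2]
    exact hb0 (funext fun i => by fin_cases i <;> simp [h.1, h.2, h2])
  have hcot02 : 0 < cot (θ 0) + cot (θ 2) := by
    rw [cot_add_cot (hsin 0).ne' (hsin 2).ne', show θ 0 + θ 2 = π - θ 1 by linarith, sin_pi_sub]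
    exact div_pos (hsin 1) (mul_pos (hsin 0) (hsin 2))
  exact sq_mul_add_sq_mul_add_sq_mul_pos
    (cot_mul_cot_add_cot_mul_cot_add_cot_mul_cot (hsin 0).ne' (hsin 1).ne' (hsin 2).ne' hθπ)
    hcot02 hb hb01

lemma intervalIntegrable_log_abs_two_mul_sin (a b : ℝ) :
    IntervalIntegrable (fun u => log |2 * sin u|) volume a b :=
  (analyticOnNhd_const.mul analyticOnNhd_sin).meromorphicOn.intervalIntegrable_log_norm

lemma hasDerivAt_lobachevsky {t : ℝ} (ht : sin t ≠ 0) :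
    HasDerivAt lobachevsky (-log (2 * sin t)) t := by
  have hcont : ContinuousAt (fun u => log |2 * sin u|) t :=
    (continuous_const.mul continuous_sin).abs.continuousAt.log (by simpa using ht)
  have hmeas : Measurable fun u => log |2 * sin u| := by fun_prop
  rw [← log_abs]
  exact (intervalIntegral.integral_hasDerivAt_right (intervalIntegrable_log_abs_two_mul_sin 0 t)
    hmeas.aestronglyMeasurable.stronglyMeasurableAtFilter hcont).neg

lemma hasDerivAt_neg_log_two_mul_sin {t : ℝ} (ht : sin t ≠ 0) :
    HasDerivAt (fun s => -log (2 * sin s)) (-cot t) t := by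
  refine (((hasDerivAt_sin t).const_mul 2).log (by simpa using ht)).neg.congr_deriv ?_
  rw [cot_eq_cos_div_sin]
  field_simp

lemma strictConcaveOn_sum_lobachevsky_comp_line {a b : Fin 3 → ℝ} (ha : ∑ i, a i = π)
    (hb : ∑ i, b i = 0) (hb0 : b ≠ 0) {D : Set ℝ} (hD : Convex ℝ D) (hDo : IsOpen D)
    (hpos : ∀ t ∈ D, ∀ i, 0 < a i + t * b i) :
    StrictConcaveOn ℝ D (fun t => ∑ i, lobachevsky (a i + t * b i)) := by
  have hsum : ∀ t, ∑ i, (a i + t * b i) = π := fun t => by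
    simp [Finset.sum_add_distrib, ← Finset.mul_sum, ha, hb]
  have hsin : ∀ t ∈ D, ∀ i, sin (a i + t * b i) ≠ 0 := fun t ht i =>
    (sin_pos_of_sum_eq_pi (hpos t ht) (hsum t) i).ne'
  refine strictConcaveOn_of_hasDerivAt2_neg hD hDo
    (f' := fun t => ∑ i, -log (2 * sin (a i + t * b i)) * b i)
    (f'' := fun t => ∑ i, -cot (a i + t * b i) * b i * b i) ?_ ?_ ?_
  · intro t ht
    exact HasDerivAt.fun_sum fun i _ => (hasDerivAt_lobachevsky (hsin t ht i)).comp_add_mul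
  · intro t ht
    exact HasDerivAt.fun_sum fun i _ =>
      (hasDerivAt_neg_log_two_mul_sin (hsin t ht i)).comp_add_mul.mul_const (b i)
  · intro t ht
    have hpos := sum_sq_mul_cot_pos (hpos t ht) (hsum t) hb hb0
    calc ∑ i, -cot (a i + t * b i) * b i * b i = -∑ i, b i ^ 2 * cot (a i + t * b i) := by
          rw [← Finset.sum_neg_distrib]
          exact Finset.sum_congr rfl fun i _ => by ring
      _ < 0 := neg_neg_of_pos hpos

def idealTetraAngles : Set (ℝ × ℝ) := {p | 0 < p.1 ∧ 0 < p.2 ∧ p.1 + p.2 < π}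

lemma convex_idealTetraAngles : Convex ℝ idealTetraAngles :=
  (convex_halfSpace_gt (LinearMap.fst ℝ ℝ ℝ).isLinear 0).inter
    ((convex_halfSpace_gt (LinearMap.snd ℝ ℝ ℝ).isLinear 0).inter
      (convex_halfSpace_lt (LinearMap.fst ℝ ℝ ℝ + LinearMap.snd ℝ ℝ ℝ).isLinear π))

lemma isOpen_idealTetraAngles : IsOpen idealTetraAngles :=
  (isOpen_lt continuous_const continuous_fst).inter ((isOpen_lt continuous_const
    continuous_snd).inter (isOpen_lt (continuous_fst.add continuous_snd) continuous_const))

/-- Rivin's theorem: the volume of an ideal tetrahedron is strictly concave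
in its dihedral angles. -/
theorem strictConcaveOn_ideal_tetra_volume :
    StrictConcaveOn ℝ
      {p : ℝ × ℝ | 0 < p.1 ∧ 0 < p.2 ∧ p.1 + p.2 < Real.pi}
      (fun p : ℝ × ℝ =>
        lobachevsky p.1 + lobachevsky p.2 + lobachevsky (Real.pi - p.1 - p.2)) := by
  refine strictConcaveOn_of_forall_lineMap convex_idealTetraAngles fun x _ y _ hxy => ?_
  have hline (t : ℝ) :
      AffineMap.lineMap x y t = (x.1 + t * (y.1 - x.1), x.2 + t * (y.2 - x.2)) := by
    ext <;>
      simp only [AffineMap.fst_lineMap, AffineMap.snd_lineMap, AffineMap.lineMap_apply_ring'] <;>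
      ring
  refine (strictConcaveOn_sum_lobachevsky_comp_line (a := ![x.1, x.2, π - x.1 - x.2])
    (b := ![y.1 - x.1, y.2 - x.2, x.1 + x.2 - y.1 - y.2]) ?_ ?_ ?_
    (convex_idealTetraAngles.affine_preimage _)
    (isOpen_idealTetraAngles.preimage AffineMap.lineMap_continuous) ?_).congr ?_
  · simp [Fin.sum_univ_three]
  · simp only [Fin.sum_univ_three, Fin.isValue, Matrix.cons_val_zero, Matrix.cons_val_one,
      Matrix.cons_val]
    ring
  · intro h
    exact hxy (Prod.ext (by simpa [sub_eq_zero, eq_comm] using congrFun h 0)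
      (by simpa [sub_eq_zero, eq_comm] using congrFun h 1))
  · intro t ht i
    rw [Set.mem_preimage, hline] at ht
    obtain ⟨h1, h2, h3⟩ := ht
    fin_cases i <;> simp only [Fin.zero_eta, Fin.mk_one, Fin.reduceFinMk, Fin.isValue,
      Matrix.cons_val_zero, Matrix.cons_val_one, Matrix.cons_val] <;> linarith
  · intro t _
    simp only [Fin.sum_univ_three, Fin.isValue, Matrix.cons_val_zero, Matrix.cons_val_one,
      Matrix.cons_val, Function.comp_apply, hline, add_right_inj]
    congr 1
    ring
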